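/- arXiv:2512.21241 — 2 statements merged into one kernel-verified Lean document; each statement's English description precedes it below -/
import Mathlib

section
/- Let v be a random vector in R^d with v ≠ 0 almost surely, and suppose the distribution of v is invariant under every orthogonal transformation fixing a given nonzero vector g (i.e., for any orthogonal Q with Qg = g, Qv has the same distribution as v). Then E[(gᵀv̄)·v̄] = E[(ḡᵀv̄)²] · g, where v̄ = v/‖v‖ and ḡ = g/‖g‖. -/
/-!
The reflection through the line `ℝ g` fixes `g`, so it preserves the law of `v` and commutes
with `v ↦ (gᵀv̄) v̄`; hence it fixes the mean of the estimator, which therefore lies on `ℝ g`.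
A vector on that line equals its orthogonal projection onto it, and projecting the estimator
pointwise gives `(ḡᵀv̄)² g`.
-/

open MeasureTheory

section

variable {E : Type*} [NormedAddCommGroup E] [InnerProductSpace ℝ E]

/-- The paper's projection estimator `ĝ = (gᵀv̄) v̄`, with `v̄ = v / ‖v‖`. -/
noncomputable def projectionEstimator (g v : E) : E :=
  (inner ℝ g (‖v‖⁻¹ • v) : ℝ) • (‖v‖⁻¹ • v)

theorem norm_inv_norm_smul_self_le_one (v : E) : ‖‖v‖⁻¹ • v‖ ≤ 1 := by
  rcases eq_or_ne v 0 with rfl | hv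
  · simp
  · rw [norm_smul, norm_inv, norm_norm, inv_mul_cancel₀ (norm_ne_zero_iff.mpr hv)]

theorem norm_projectionEstimator_le (g v : E) : ‖projectionEstimator g v‖ ≤ ‖g‖ := by
  have hv := norm_inv_norm_smul_self_le_one v
  calc ‖projectionEstimator g v‖ = |inner ℝ g (‖v‖⁻¹ • v)| * ‖‖v‖⁻¹ • v‖ := by
        rw [projectionEstimator, norm_smul, Real.norm_eq_abs]
    _ ≤ (‖g‖ * ‖‖v‖⁻¹ • v‖) * 1 := by
        gcongr
        exact abs_real_inner_le_norm _ _
    _ ≤ ‖g‖ := by nlinarith [norm_nonneg g]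

theorem projectionEstimator_map {g : E} (Q : E ≃ₗᵢ[ℝ] E) (hQg : Q g = g) (v : E) :
    projectionEstimator g (Q v) = Q (projectionEstimator g v) := by
  simp only [projectionEstimator, LinearIsometryEquiv.norm_map, ← Q.map_smul]
  conv_lhs => rw [← hQg, LinearIsometryEquiv.inner_map_map]

theorem starProjection_projectionEstimator (g v : E) :
    (Submodule.span ℝ {g}).starProjection (projectionEstimator g v)
      = (inner ℝ (‖g‖⁻¹ • g) (‖v‖⁻¹ • v) : ℝ) ^ 2 • g := by
  rw [projectionEstimator, map_smul, Submodule.starProjection_singleton, smul_smul,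
    real_inner_smul_left]
  simp only [RCLike.ofReal_real_eq_id, id]
  field_simp

variable [MeasurableSpace E] [BorelSpace E]

theorem measurable_projectionEstimator [SecondCountableTopology E] (g : E) :
    Measurable (projectionEstimator g) := by
  have hnormalize : Measurable fun v : E => ‖v‖⁻¹ • v := measurable_norm.inv.smul measurable_id
  exact ((continuous_const.inner continuous_id).measurable.comp hnormalize).smul hnormalize

theorem integrable_projectionEstimator [SecondCountableTopology E] (g : E) (μ : Measure E)
    [IsFiniteMeasure μ] :
    Integrable (projectionEstimator g) μ :=
  (integrable_const ‖g‖).mono' (measurable_projectionEstimator g).aestronglyMeasurable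
    (.of_forall (norm_projectionEstimator_le g))

theorem integral_mem_of_map_reflection_eq {K : Submodule ℝ E} [K.HasOrthogonalProjection]
    {μ : Measure E} (hμ : μ.map K.reflection = μ) {f : E → E}
    (hf : ∀ v, f (K.reflection v) = K.reflection (f v)) :
    ∫ v, f v ∂μ ∈ K := by
  rw [← K.reflection_eq_self_iff]
  calc K.reflection (∫ v, f v ∂μ) = ∫ v, K.reflection (f v) ∂μ :=
        (K.reflection.toContinuousLinearEquiv.integral_comp_comm f).symm
    _ = ∫ v, f (K.reflection v) ∂μ := by simp only [hf]
    _ = ∫ v, f v ∂μ.map K.reflection :=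
        (integral_map_equiv K.reflection.toHomeomorph.toMeasurableEquiv f).symm
    _ = ∫ v, f v ∂μ := by rw [hμ]

end

theorem projection_estimator_proportional_general {d : ℕ} (g : EuclideanSpace ℝ (Fin d))
    (μ : Measure (EuclideanSpace ℝ (Fin d))) [IsProbabilityMeasure μ]
    (hinv : ∀ Q : EuclideanSpace ℝ (Fin d) ≃ₗᵢ[ℝ] EuclideanSpace ℝ (Fin d),
      Q g = g → μ.map Q = μ) :
    ∫ v, (inner ℝ g (‖v‖⁻¹ • v) : ℝ) • (‖v‖⁻¹ • v) ∂μ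
      = (∫ v, (inner ℝ (‖g‖⁻¹ • g) (‖v‖⁻¹ • v) : ℝ) ^ 2 ∂μ) • g := by
  set K := Submodule.span ℝ {g}
  have hKg : K.reflection g = g :=
    K.reflection_mem_subspace_eq_self (Submodule.mem_span_singleton_self g)
  have hmem : ∫ v, projectionEstimator g v ∂μ ∈ K :=
    integral_mem_of_map_reflection_eq (hinv _ hKg) (projectionEstimator_map _ hKg)
  calc ∫ v, projectionEstimator g v ∂μ
      = K.starProjection (∫ v, projectionEstimator g v ∂μ) :=
        (K.starProjection_eq_self_iff.mpr hmem).symm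
    _ = ∫ v, K.starProjection (projectionEstimator g v) ∂μ :=
        (K.starProjection.integral_comp_comm (integrable_projectionEstimator g μ)).symm
    _ = _ := by simp only [K, starProjection_projectionEstimator, integral_smul_const]

/-- If the law of a (a.s. nonzero) random vector `v` in `ℝ^d` is invariant under every
orthogonal transformation fixing a given nonzero vector `g`, then
`E[(gᵀv̄)·v̄] = E[(ḡᵀv̄)²] · g`, where `v̄ = v/‖v‖` and `ḡ = g/‖g‖`. -/
theorem projection_estimator_proportional {d : ℕ} (g : EuclideanSpace ℝ (Fin d)) (hg : g ≠ 0)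
    (μ : Measure (EuclideanSpace ℝ (Fin d))) [IsProbabilityMeasure μ]
    (hne : ∀ᵐ v ∂μ, v ≠ 0)
    (hinv : ∀ Q : EuclideanSpace ℝ (Fin d) ≃ₗᵢ[ℝ] EuclideanSpace ℝ (Fin d),
      Q g = g → μ.map Q = μ) :
    ∫ v, (inner ℝ g (‖v‖⁻¹ • v) : ℝ) • (‖v‖⁻¹ • v) ∂μ
      = (∫ v, (inner ℝ (‖g‖⁻¹ • g) (‖v‖⁻¹ • v) : ℝ) ^ 2 ∂μ) • g :=
  projection_estimator_proportional_general g μ hinv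
end

section
/- Let g ∈ R^d be nonzero, p₁, …, p_s an orthonormal set, and suppose v̄ is a random unit vector orthogonal to all pᵢ almost surely, whose conditional distribution is rotationally symmetric about the projection of g onto the orthogonal complement W of span{p₁,…,p_s}. Write g = g_P + g_W where g_P is the projection onto span{p₁,…,p_s}. If c := E[(ḡ_Wᵀ v̄)²] (when g_W ≠ 0), then E[(1/c)(gᵀv̄)v̄ + Σᵢ (gᵀpᵢ)pᵢ] = g. -/
/-!
Almost surely `⟪g, v⟫ = ⟪g_W, v⟫`, so the random term has mean `(1/c) m` with
`m = E[⟪g_W, v⟫ v]`. For `u` orthogonal to `g_W` and to the priors, the reflection in `u^⊥`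
preserves the law of `v` and fixes `g_W`, hence fixes `m`; so `m` is orthogonal to every such `u`
and to the priors, i.e. `m` is a multiple of `g_W`, and `⟪g_W, m⟫ = c ‖g_W‖²` gives `m = c g_W`.
-/

open MeasureTheory
open scoped RealInnerProductSpace

section SecondMoment

variable {E : Type*} [NormedAddCommGroup E] [InnerProductSpace ℝ E]

theorem eq_smul_of_forall_orthogonal_inner_eq_zero {ι : Type*} (p : ι → E) {w m : E} {a : ℝ}
    (horth : ∀ u, ⟪u, w⟫ = 0 → (∀ i, ⟪u, p i⟫ = 0) → ⟪u, m⟫ = 0)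
    (hw : ∀ i, ⟪w, p i⟫ = 0) (hm : ∀ i, ⟪m, p i⟫ = 0) (hwm : ⟪w, m⟫ = a * ‖w‖ ^ 2) :
    m = a • w := by
  have huw : ⟪m - a • w, w⟫ = 0 := by
    rw [inner_sub_left, real_inner_smul_left, real_inner_comm, hwm, real_inner_self_eq_norm_sq,
      sub_self]
  have hup : ∀ i, ⟪m - a • w, p i⟫ = 0 := fun i => by
    rw [inner_sub_left, real_inner_smul_left, hw, hm, mul_zero, sub_zero]
  have hself : ⟪m - a • w, m - a • w⟫ = 0 := by
    rw [inner_sub_right, real_inner_smul_right, horth _ huw hup, huw, mul_zero, sub_zero]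
  exact sub_eq_zero.mp (inner_self_eq_zero.mp hself)

theorem reflection_orthogonal_singleton_eq_self {u x : E} (hx : ⟪u, x⟫ = 0) :
    (ℝ ∙ u)ᗮ.reflection x = x :=
  Submodule.reflection_mem_subspace_eq_self <|
    Submodule.mem_orthogonal_singleton_iff_inner_right.mpr hx

variable [MeasurableSpace E] (μ : Measure E)

theorem integral_inner_sq_eq_norm_sq_mul (w : E) :
    ∫ v, ⟪w, v⟫ ^ 2 ∂μ = ‖w‖ ^ 2 * ∫ v, ⟪‖w‖⁻¹ • w, v⟫ ^ 2 ∂μ := by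
  rcases eq_or_ne w 0 with rfl | hw
  · simp
  simp_rw [real_inner_smul_left, mul_pow]
  rw [integral_const_mul, ← mul_assoc, ← mul_pow, mul_inv_cancel₀ (norm_ne_zero_iff.mpr hw),
    one_pow, one_mul]

theorem integrable_inner_smul_of_ae_norm_le_one [SecondCountableTopology E] [OpensMeasurableSpace E]
    [IsFiniteMeasure μ] (hμ : ∀ᵐ v ∂μ, ‖v‖ ≤ 1) (w : E) :
    Integrable (fun v => ⟪w, v⟫ • v) μ := by
  refine Integrable.mono' (integrable_const ‖w‖) (by fun_prop) ?_
  filter_upwards [hμ] with v hv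
  calc ‖⟪w, v⟫ • v‖ = |⟪w, v⟫| * ‖v‖ := by rw [norm_smul, Real.norm_eq_abs]
    _ ≤ (‖w‖ * ‖v‖) * ‖v‖ := by gcongr; exact abs_real_inner_le_norm w v
    _ ≤ ‖w‖ := by nlinarith [mul_le_one₀ hv (norm_nonneg v) hv, norm_nonneg w]

variable [CompleteSpace E]

theorem inner_integral_inner_smul {w : E} (hw : Integrable (fun v => ⟪w, v⟫ • v) μ)
    (u : E) : ⟪u, ∫ v, ⟪w, v⟫ • v ∂μ⟫ = ∫ v, ⟪w, v⟫ * ⟪u, v⟫ ∂μ := by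
  simp_rw [← integral_inner hw u, real_inner_smul_right]

variable [BorelSpace E]

theorem map_integral_inner_smul_of_map_eq {Q : E ≃ₗᵢ[ℝ] E} (hμ : μ.map Q = μ) {w : E}
    (hw : Q w = w) : Q (∫ v, ⟪w, v⟫ • v ∂μ) = ∫ v, ⟪w, v⟫ • v ∂μ :=
  calc Q (∫ v, ⟪w, v⟫ • v ∂μ) = ∫ v, ⟪Q w, Q v⟫ • Q v ∂μ := by
        simp_rw [Q.inner_map_map, ← LinearIsometryEquiv.map_smul]
        exact (Q.toLinearIsometry.integral_comp_comm _).symm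
    _ = ∫ v, ⟪w, v⟫ • v ∂μ.map Q := by
        rw [hw, Q.isometry.isClosedEmbedding.integral_map]
    _ = ∫ v, ⟪w, v⟫ • v ∂μ := by rw [hμ]

theorem inner_integral_inner_smul_eq_zero_of_map_reflection {u w : E} (huw : ⟪u, w⟫ = 0)
    (hμ : μ.map (ℝ ∙ u)ᗮ.reflection = μ) : ⟪u, ∫ v, ⟪w, v⟫ • v ∂μ⟫ = 0 :=
  Submodule.mem_orthogonal_singleton_iff_inner_right.mp <|
    (Submodule.reflection_eq_self_iff _).mp <|
      map_integral_inner_smul_of_map_eq μ hμ (reflection_orthogonal_singleton_eq_self huw)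

variable [SecondCountableTopology E] [IsFiniteMeasure μ]

theorem integral_inner_smul_eq_smul_of_map_reflection {ι : Type*} (p : ι → E)
    (hμ : ∀ᵐ v ∂μ, ‖v‖ ≤ 1 ∧ ∀ i, ⟪p i, v⟫ = 0) {w : E} (hw : ∀ i, ⟪w, p i⟫ = 0)
    (hrefl : ∀ u, ⟪u, w⟫ = 0 → (∀ i, ⟪u, p i⟫ = 0) → μ.map (ℝ ∙ u)ᗮ.reflection = μ) :
    ∫ v, ⟪w, v⟫ • v ∂μ = (∫ v, ⟪‖w‖⁻¹ • w, v⟫ ^ 2 ∂μ) • w := by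
  have hint := integrable_inner_smul_of_ae_norm_le_one μ (hμ.mono fun _ h => h.1) w
  refine eq_smul_of_forall_orthogonal_inner_eq_zero p
    (fun u huw hup => inner_integral_inner_smul_eq_zero_of_map_reflection μ huw (hrefl u huw hup))
    hw (fun i => ?_) ?_
  · rw [real_inner_comm, inner_integral_inner_smul μ hint]
    exact integral_eq_zero_of_ae (hμ.mono fun v hv => by simp [hv.2 i])
  · rw [inner_integral_inner_smul μ hint, mul_comm, ← integral_inner_sq_eq_norm_sq_mul]
    simp only [sq]

end SecondMoment

theorem pars_estimator_unbiased_general {d s : ℕ}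
    (g : EuclideanSpace ℝ (Fin d))
    (p : Fin s → EuclideanSpace ℝ (Fin d)) (hp : Orthonormal ℝ p)
    (μ : Measure (EuclideanSpace ℝ (Fin d))) [IsProbabilityMeasure μ]
    (has : ∀ᵐ v ∂μ, ‖v‖ = 1 ∧ ∀ i, (inner ℝ (p i) v : ℝ) = 0)
    (gP gW : EuclideanSpace ℝ (Fin d))
    (hgP : gP = ∑ i, (inner ℝ g (p i) : ℝ) • p i) (hgW : gW = g - gP)
    (hinv : ∀ Q : EuclideanSpace ℝ (Fin d) ≃ₗᵢ[ℝ] EuclideanSpace ℝ (Fin d),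
      Q gW = gW → (∀ i, Q (p i) = p i) → μ.map Q = μ)
    (c : ℝ) (hc : c = ∫ v, (inner ℝ (‖gW‖⁻¹ • gW) v : ℝ) ^ 2 ∂μ) (hc0 : c ≠ 0) :
    (∫ v, ((1 / c) * (inner ℝ g v : ℝ)) • v ∂μ) + ∑ i, (inner ℝ g (p i) : ℝ) • p i = g := by
  have hgWp : ∀ i, ⟪gW, p i⟫ = 0 := fun i => by
    rw [hgW, hgP, inner_sub_left, hp.inner_left_fintype, conj_trivial, sub_self]
  have hgv : ∀ᵐ v ∂μ, ⟪g, v⟫ = ⟪gW, v⟫ := by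
    filter_upwards [has] with v hv
    simp [hgW, hgP, inner_sub_left, sum_inner, real_inner_smul_left, hv.2]
  have hm : ∫ v, ⟪gW, v⟫ • v ∂μ = c • gW := by
    rw [hc]
    exact integral_inner_smul_eq_smul_of_map_reflection μ p (has.mono fun _ h => ⟨h.1.le, h.2⟩)
      hgWp fun u huW hup => hinv _ (reflection_orthogonal_singleton_eq_self huW)
        fun i => reflection_orthogonal_singleton_eq_self (hup i)
  calc (∫ v, ((1 / c) * ⟪g, v⟫) • v ∂μ) + ∑ i, ⟪g, p i⟫ • p i
      = (1 / c) • ∫ v, ⟪gW, v⟫ • v ∂μ + gP := by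
        rw [← integral_smul, hgP]
        congr 1
        refine integral_congr_ae (hgv.mono fun v hv => ?_)
        dsimp only
        rw [hv, mul_smul]
    _ = g := by rw [hm, smul_smul, one_div, inv_mul_cancel₀ hc0, one_smul, hgW, sub_add_cancel]

/-- Unbiasedness structure of the PARS-OPT estimator: if `v̄` is a random unit vector
(with law `μ`) orthogonal to the orthonormal priors `pᵢ` a.s., whose law is rotationally
symmetric about the projection `g_W` of `g` on the orthogonal complement of the priors, and
`c = E[(ḡ_Wᵀv̄)²] ≠ 0`, then `E[(1/c)(gᵀv̄)v̄ + Σᵢ(gᵀpᵢ)pᵢ] = g`. -/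
theorem pars_estimator_unbiased {d s : ℕ}
    (g : EuclideanSpace ℝ (Fin d)) (hg : g ≠ 0)
    (p : Fin s → EuclideanSpace ℝ (Fin d)) (hp : Orthonormal ℝ p)
    (μ : Measure (EuclideanSpace ℝ (Fin d))) [IsProbabilityMeasure μ]
    (has : ∀ᵐ v ∂μ, ‖v‖ = 1 ∧ ∀ i, (inner ℝ (p i) v : ℝ) = 0)
    (gP gW : EuclideanSpace ℝ (Fin d))
    (hgP : gP = ∑ i, (inner ℝ g (p i) : ℝ) • p i) (hgW : gW = g - gP) (hgW0 : gW ≠ 0)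
    (hinv : ∀ Q : EuclideanSpace ℝ (Fin d) ≃ₗᵢ[ℝ] EuclideanSpace ℝ (Fin d),
      Q gW = gW → (∀ i, Q (p i) = p i) → μ.map Q = μ)
    (c : ℝ) (hc : c = ∫ v, (inner ℝ (‖gW‖⁻¹ • gW) v : ℝ) ^ 2 ∂μ) (hc0 : c ≠ 0) :
    (∫ v, ((1 / c) * (inner ℝ g v : ℝ)) • v ∂μ) + ∑ i, (inner ℝ g (p i) : ℝ) • p i = g :=
  pars_estimator_unbiased_general g p hp μ has gP gW hgP hgW hinv c hc hc0
end
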